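/- For γ ∈ ℝ, γ̃ ∈ ℝ and r > 1, the ratio K'_{γ̃}(r)/K'_γ(r) satisfies |K'_{γ̃}(r)/K'_γ(r) - 1| ≤ sup_{s∈[1,r]} |s^{γ̃-γ} - 1|, where K'_z(r) = ∫₁ʳ s^{z-1} log(s) ds. -/

import Mathlib

open Real Set intervalIntegral

/-- `K'_z(r) = ∫₁ʳ s^{z-1} log s ds`. -/
noncomputable def Kfun' (z u : ℝ) : ℝ := ∫ v in (1:ℝ)..u, v ^ (z - 1) * Real.log v

/-! Since `s^{γ-1} log s ≥ 0` on `[1, r]`, the pointwise bound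
`|s^{γ̃-1} log s - s^{γ-1} log s| = |s^{γ̃-γ} - 1| s^{γ-1} log s ≤ M s^{γ-1} log s`
integrates to `|K'_{γ̃}(r) - K'_γ(r)| ≤ M K'_γ(r)`, and `K'_γ(r) > 0`. -/

theorem abs_integral_sub_le_mul_integral {f g : ℝ → ℝ} {a b M : ℝ} (hab : a ≤ b)
    (hf : IntervalIntegrable f MeasureTheory.volume a b)
    (hg : IntervalIntegrable g MeasureTheory.volume a b)
    (h : ∀ x ∈ Icc a b, |f x - g x| ≤ M * g x) :
    |(∫ x in a..b, f x) - ∫ x in a..b, g x| ≤ M * ∫ x in a..b, g x := by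
  rw [← integral_sub hf hg, ← integral_const_mul]
  exact (abs_integral_le_integral_abs hab).trans
    (integral_mono_on hab (hf.sub hg).abs (hg.const_mul M) h)

theorem abs_integral_div_integral_sub_one_le {f g : ℝ → ℝ} {a b M : ℝ} (hab : a ≤ b)
    (hf : IntervalIntegrable f MeasureTheory.volume a b)
    (hg : IntervalIntegrable g MeasureTheory.volume a b)
    (hg_pos : 0 < ∫ x in a..b, g x)
    (h : ∀ x ∈ Icc a b, |f x - g x| ≤ M * g x) :
    |(∫ x in a..b, f x) / (∫ x in a..b, g x) - 1| ≤ M := by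
  rw [div_sub_one hg_pos.ne', abs_div, abs_of_pos hg_pos, div_le_iff₀ hg_pos]
  exact abs_integral_sub_le_mul_integral hab hf hg h

theorem intervalIntegrable_rpow_mul_log (z : ℝ) {a b : ℝ} (ha : 0 < a) (hb : 0 < b) :
    IntervalIntegrable (fun v : ℝ => v ^ (z - 1) * Real.log v) MeasureTheory.volume a b := by
  refine ContinuousOn.intervalIntegrable fun x hx => ?_
  have hx0 : x ≠ 0 := (lt_min ha hb |>.trans_le hx.1).ne'
  exact ((continuousAt_rpow_const x _ (Or.inl hx0)).mul
    (continuousAt_log hx0)).continuousWithinAt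

theorem rpow_mul_log_pos {x : ℝ} (hx : 1 < x) (z : ℝ) : 0 < x ^ z * Real.log x :=
  mul_pos (rpow_pos_of_pos (zero_lt_one.trans hx) z) (log_pos hx)

theorem Kfun'_pos (z : ℝ) {r : ℝ} (hr : 1 < r) : 0 < Kfun' z r :=
  intervalIntegral_pos_of_pos_on (intervalIntegrable_rpow_mul_log z one_pos (one_pos.trans hr))
    (fun _ hx => rpow_mul_log_pos hx.1 _) hr

theorem abs_rpow_mul_log_sub_le {x γ γtilde M : ℝ} (hx : 1 ≤ x)
    (hM : |x ^ (γtilde - γ) - 1| ≤ M) :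
    |x ^ (γtilde - 1) * Real.log x - x ^ (γ - 1) * Real.log x|
      ≤ M * (x ^ (γ - 1) * Real.log x) := by
  have hx0 : 0 < x := zero_lt_one.trans_le hx
  have hnn : 0 ≤ x ^ (γ - 1) * Real.log x :=
    mul_nonneg (rpow_nonneg hx0.le _) (log_nonneg hx)
  have hsplit : x ^ (γtilde - 1) = x ^ (γtilde - γ) * x ^ (γ - 1) := by
    rw [← rpow_add hx0]; ring_nf
  calc |x ^ (γtilde - 1) * Real.log x - x ^ (γ - 1) * Real.log x|
      = |(x ^ (γtilde - γ) - 1) * (x ^ (γ - 1) * Real.log x)| := by rw [hsplit]; ring_nf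
    _ = |x ^ (γtilde - γ) - 1| * (x ^ (γ - 1) * Real.log x) := by rw [abs_mul, abs_of_nonneg hnn]
    _ ≤ M * (x ^ (γ - 1) * Real.log x) := mul_le_mul_of_nonneg_right hM hnn

/-- The ratio `K'_{γ̃}(r)/K'_γ(r)` is close to 1 when `s^{γ̃-γ}` is uniformly close
to 1 on `[1, r]`. -/
theorem Kfun'_ratio_bound (γ γtilde r : ℝ) (hr : 1 < r) (M : ℝ)
    (hM : ∀ s ∈ Icc (1:ℝ) r, |s ^ (γtilde - γ) - 1| ≤ M) :
    |Kfun' γtilde r / Kfun' γ r - 1| ≤ M := by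
  have hr0 : 0 < r := one_pos.trans hr
  exact abs_integral_div_integral_sub_one_le hr.le
    (intervalIntegrable_rpow_mul_log γtilde one_pos hr0)
    (intervalIntegrable_rpow_mul_log γ one_pos hr0) (Kfun'_pos γ hr)
    (fun x hx => abs_rpow_mul_log_sub_le hx.1 (hM x hx))
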